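/- Let X be a symmetric set and let X^♭ be its quotient by the equivalence relation ∼ generated by the relation ≈. Then for every spiny symmetric set U, precomposition with the quotient map X → X^♭ gives a bijection Hom(X^♭, U) → Hom(X, U). -/

import Mathlib

/-- A (skeletal) simplicial set: a contravariant functor on the simplex category,
with `obj n` the set of `n`-simplices and `map α` the action of an
order-preserving map `α : [m] → [n]`. -/
structure SSet' where
  obj : ℕ → Type
  map : ∀ {m n : ℕ}, (Fin (m + 1) →o Fin (n + 1)) → obj n → obj m
  map_id : ∀ (n : ℕ) (x : obj n), map OrderHom.id x = x
  map_comp : ∀ {k m n : ℕ} (α : Fin (k + 1) →o Fin (m + 1)) (β : Fin (m + 1) →o Fin (n + 1))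
      (x : obj n), map (β.comp α) x = map α (map β x)

/-- The order-preserving map `ρ_{ij} : [1] → [n]`, `0 ↦ i`, `1 ↦ j` (for `i ≤ j`). -/
def rho {n : ℕ} (i j : Fin (n + 1)) (h : i ≤ j) : Fin 2 →o Fin (n + 1) where
  toFun := ![i, j]
  monotone' := by
    intro a b hab
    fin_cases a <;> fin_cases b <;> simp_all

/-- The `k`-th edge `ρ_{k,k+1}^*(x)` of an `n`-simplex. -/
def SSet'.edge (X : SSet') {n : ℕ} (x : X.obj n) (k : Fin n) : X.obj 1 :=
  X.map (rho k.castSucc k.succ (Fin.castSucc_lt_succ (i := k)).le) x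

/-- A simplicial set is edgy if each simplex is determined by its string of edges. -/
def SSet'.IsEdgy (X : SSet') : Prop :=
  ∀ n : ℕ, 1 ≤ n → Function.Injective fun (x : X.obj n) (k : Fin n) => X.edge x k

/-- Conjugation of an order-preserving map by the flips `τ`. -/
def conj {m n : ℕ} (α : Fin (m + 1) →o Fin (n + 1)) : Fin (m + 1) →o Fin (n + 1) where
  toFun k := (α k.rev).rev
  monotone' := by
    intro a b hab
    exact Fin.rev_le_rev.mpr (α.monotone (Fin.rev_le_rev.mpr hab))

/-- An anti-involution on a simplicial set `X`, i.e. a simplicial map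
`ν : X^op → X` with `ν^op ∘ ν = id`, described levelwise.  Naturality of
`ν : X^op → X` amounts to `ν (X(τ∘α∘τ) x) = X(α) (ν x)`. -/
structure AntiInvolution (X : SSet') where
  app : ∀ n : ℕ, X.obj n → X.obj n
  naturality : ∀ {m n : ℕ} (α : Fin (m + 1) →o Fin (n + 1)) (x : X.obj n),
    app m (X.map (conj α) x) = X.map α (app n x)
  involutive : ∀ (n : ℕ) (x : X.obj n), app n (app n x) = x

/-- The constant map `[1] → [n]` at the last vertex, i.e. `s_0 ∘ (d_0)^n`. -/
def lastConst (n : ℕ) : Fin 2 →o Fin (n + 1) := ⟨fun _ => Fin.last n, monotone_const⟩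

/-- `LSpec X ν x y` says that `y ∈ X_{2n}` has the edge string
`[f_n† | ⋯ | f_1† | f_1 | ⋯ | f_n]`, where `[f_1 | ⋯ | f_n]` is the edge string of
`x ∈ X_n`, and that the total composite `ρ_{0,2n}^*(y)` is the identity
`s_0(d_0^n x)` on the last vertex of `x`. -/
def LSpec (X : SSet') (ν : AntiInvolution X) {n : ℕ} (x : X.obj n) (y : X.obj (n + n)) : Prop :=
  (∀ k : Fin (n + n), X.edge y k =
      if h : (k : ℕ) < n then ν.app 1 (X.edge x ⟨n - 1 - (k : ℕ), by omega⟩)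
      else X.edge x ⟨(k : ℕ) - n, by have := k.isLt; omega⟩) ∧
  X.map (rho 0 (Fin.last (n + n)) (Fin.zero_le _)) y = X.map (lastConst n) x

/-- A partial groupoid structure on a simplicial set: it is edgy, has an
anti-involution which is the identity on vertices, and has operators
`L : X_n → X_{2n}` with `L[f_1|⋯|f_n] = [f_n†|⋯|f_1†|f_1|⋯|f_n]` whose total
composite is an identity. -/
structure PartialGroupoidStruct (X : SSet') where
  edgy : X.IsEdgy
  inv : AntiInvolution X
  inv_zero : ∀ x : X.obj 0, inv.app 0 x = x
  L : ∀ {n : ℕ}, X.obj n → X.obj (n + n)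
  L_spec : ∀ {n : ℕ}, 1 ≤ n → ∀ x : X.obj n, LSpec X inv x (L x)

/-- The Prop-valued version: `X` together with the anti-involution `ν` is a
partial groupoid. -/
def IsPartialGroupoid (X : SSet') (ν : AntiInvolution X) : Prop :=
  X.IsEdgy ∧ (∀ v : X.obj 0, ν.app 0 v = v) ∧
    ∀ n : ℕ, 1 ≤ n → ∀ x : X.obj n, ∃ y : X.obj (n + n), LSpec X ν x y

/-- The matrix form of an `n`-simplex: `x_{ij} = ρ_{ij}^*(x)` for `i ≤ j`, and
`x_{ji} = (x_{ij})†`. -/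
def matrixForm (X : SSet') (ν : AntiInvolution X) {n : ℕ} (x : X.obj n) (i j : Fin (n + 1)) :
    X.obj 1 :=
  if h : i ≤ j then X.map (rho i j h) x
  else ν.app 1 (X.map (rho j i (le_of_not_ge h)) x)

/-- The fold map `χ_n : [2n] → [n]`, `i ↦ |n - i|`. -/
def chi (n : ℕ) (i : Fin (n + n + 1)) : Fin (n + 1) :=
  ⟨max n (i : ℕ) - min n (i : ℕ), by have := i.isLt; omega⟩

/-- A map of simplicial sets. -/
structure SSetHom (X Y : SSet') where
  app : ∀ n : ℕ, X.obj n → Y.obj n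
  naturality : ∀ {m n : ℕ} (α : Fin (m + 1) →o Fin (n + 1)) (x : X.obj n),
    app m (X.map α x) = Y.map α (app n x)
/-- A symmetric (simplicial) set: a contravariant functor on the category `Υ`
of the sets `[n]` and arbitrary functions. -/
structure SymSet where
  obj : ℕ → Type
  map : ∀ {m n : ℕ}, (Fin (m + 1) → Fin (n + 1)) → obj n → obj m
  map_id : ∀ (n : ℕ) (x : obj n), map id x = x
  map_comp : ∀ {k m n : ℕ} (φ : Fin (k + 1) → Fin (m + 1)) (ψ : Fin (m + 1) → Fin (n + 1))
      (x : obj n), map (ψ ∘ φ) x = map φ (map ψ x)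

/-- Restriction `J^*` of a symmetric set along the inclusion `J : Δ → Υ`. -/
def SymSet.restrict (Z : SymSet) : SSet' where
  obj := Z.obj
  map α x := Z.map (⇑α) x
  map_id n x := Z.map_id n x
  map_comp α β x := Z.map_comp (⇑α) (⇑β) x

/-- A map of symmetric sets. -/
structure SymSetHom (Y Z : SymSet) where
  app : ∀ n : ℕ, Y.obj n → Z.obj n
  naturality : ∀ {m n : ℕ} (φ : Fin (m + 1) → Fin (n + 1)) (x : Y.obj n),
    app m (Y.map φ x) = Z.map φ (app n x)

/-- The identity map of symmetric sets. -/
def SymSetHom.id (X : SymSet) : SymSetHom X X where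
  app _ x := x
  naturality _ _ := rfl

/-- Composition of maps of symmetric sets. -/
def SymSetHom.comp {X Y Z : SymSet} (G : SymSetHom Y Z) (F : SymSetHom X Y) : SymSetHom X Z where
  app n x := G.app n (F.app n x)
  naturality φ x := by rw [F.naturality, G.naturality]

/-- Restriction `J^*` of a map of symmetric sets. -/
def SymSetHom.restrict {Y Z : SymSet} (G : SymSetHom Y Z) : SSetHom Y.restrict Z.restrict where
  app := G.app
  naturality α x := G.naturality (⇑α) x

/-- The `k`-th edge `ρ_{k,k+1}^*(x)` of an `n`-simplex of a symmetric set. -/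
def SymSet.edge (X : SymSet) {n : ℕ} (x : X.obj n) (k : Fin n) : X.obj 1 :=
  X.map (fun t : Fin 2 => if t = 0 then k.castSucc else k.succ) x

/-- A symmetric set is spiny if each simplex is determined by its string of
edges, i.e. `ℰ_n : X_n → ∏_{i=1}^n X_1` is injective for `n ≥ 1`. -/
def SymSet.Spiny (X : SymSet) : Prop :=
  ∀ n : ℕ, 1 ≤ n → Function.Injective fun (x : X.obj n) (k : Fin n) => X.edge x k

/-- `ℰ_m(x) = ℰ_m(y)`, where `ℰ_0` is the identity of `X_0` and for `m ≥ 1`,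
`ℰ_m` is the string-of-edges map. -/
def SymSet.ECond (X : SymSet) {m : ℕ} (x y : X.obj m) : Prop :=
  (m = 0 → x = y) ∧ ∀ k : Fin m, X.edge x k = X.edge y k

/-- The relation `≈` on `X_n`: `x ≈ x′` iff there are `φ : [n] → [m]` and
`x̃, x̃′ ∈ X_m` with `ℰ_m(x̃) = ℰ_m(x̃′)`, `φ^* x̃ = x` and `φ^* x̃′ = x′`. -/
def SymSet.approx (X : SymSet) {n : ℕ} (x y : X.obj n) : Prop :=
  ∃ (m : ℕ) (φ : Fin (n + 1) → Fin (m + 1)) (xt yt : X.obj m),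
    X.ECond xt yt ∧ X.map φ xt = x ∧ X.map φ yt = y

/-- The equivalence relation `∼` generated by `≈`, as a setoid. -/
def SymSet.flatSetoid (X : SymSet) (n : ℕ) : Setoid (X.obj n) :=
  Relation.EqvGen.setoid (fun x y => X.approx x y)

theorem SymSet.approx_map (X : SymSet) {k n : ℕ} (ψ : Fin (k + 1) → Fin (n + 1))
    {x y : X.obj n} (h : X.approx x y) : X.approx (X.map ψ x) (X.map ψ y) := by
  obtain ⟨m, φ, xt, yt, hE, hx, hy⟩ := h
  exact ⟨m, φ ∘ ψ, xt, yt, hE, by rw [X.map_comp, hx], by rw [X.map_comp, hy]⟩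

theorem SymSet.eqvGen_map (X : SymSet) {k n : ℕ} (ψ : Fin (k + 1) → Fin (n + 1))
    {x y : X.obj n} (h : Relation.EqvGen (fun a b => X.approx a b) x y) :
    Relation.EqvGen (fun a b => X.approx a b) (X.map ψ x) (X.map ψ y) := by
  induction h with
  | rel a b hab => exact Relation.EqvGen.rel _ _ (X.approx_map ψ hab)
  | refl a => exact Relation.EqvGen.refl _
  | symm a b _ ih => exact Relation.EqvGen.symm _ _ ih
  | trans a b c _ _ ih1 ih2 => exact Relation.EqvGen.trans _ _ _ ih1 ih2

/-- The quotient `X^♭` of `X` by the equivalence relation `∼` generated by `≈`. -/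
def SymSet.flat (X : SymSet) : SymSet where
  obj n := Quotient (X.flatSetoid n)
  map φ := Quotient.map (X.map φ) (fun _ _ h => X.eqvGen_map φ h)
  map_id n x := by
    induction x using Quotient.ind
    exact congrArg (Quotient.mk _) (X.map_id n _)
  map_comp φ ψ x := by
    induction x using Quotient.ind
    exact congrArg (Quotient.mk _) (X.map_comp φ ψ _)

/-- The quotient map `X → X^♭`. -/
def SymSet.flatProj (X : SymSet) : SymSetHom X X.flat where
  app _ x := Quotient.mk _ x
  naturality _ _ := rfl

/- A map into a spiny `U` sees an `m`-simplex only through its string of edges, so it identifies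
the two lifts in every instance of `≈`, hence respects `∼` and factors uniquely through `X^♭`. -/

theorem SymSetHom.ext {X Y : SymSet} {F G : SymSetHom X Y} (h : F.app = G.app) : F = G := by
  cases F; cases G; cases h; rfl

theorem SymSetHom.edge_app {X U : SymSet} (F : SymSetHom X U) {m : ℕ} (x : X.obj m)
    (k : Fin m) : U.edge (F.app m x) k = F.app 1 (X.edge x k) := by
  rw [SymSet.edge, SymSet.edge, F.naturality]

theorem SymSetHom.app_eq_of_eCond {X U : SymSet} (hU : U.Spiny) (F : SymSetHom X U) {m : ℕ}
    {x y : X.obj m} (h : X.ECond x y) : F.app m x = F.app m y := by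
  obtain ⟨h0, hedge⟩ := h
  rcases Nat.eq_zero_or_pos m with rfl | hm
  · rw [h0 rfl]
  · refine hU m hm (funext fun k => ?_)
    simp only [F.edge_app, hedge k]

theorem SymSetHom.app_eq_of_approx {X U : SymSet} (hU : U.Spiny) (F : SymSetHom X U) {n : ℕ}
    {x y : X.obj n} (h : X.approx x y) : F.app n x = F.app n y := by
  obtain ⟨m, φ, xt, yt, hE, rfl, rfl⟩ := h
  rw [F.naturality, F.naturality, F.app_eq_of_eCond hU hE]

theorem SymSetHom.flatSetoid_le_ker {X U : SymSet} (hU : U.Spiny) (F : SymSetHom X U) (n : ℕ) :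
    X.flatSetoid n ≤ Setoid.ker (F.app n) := fun _ _ h =>
  (Setoid.ker (F.app n)).iseqv.eqvGen_iff.1
    (Relation.EqvGen.mono (fun _ _ => F.app_eq_of_approx hU) _ _ h)

def SymSet.flatLift {X U : SymSet} (hU : U.Spiny) (F : SymSetHom X U) : SymSetHom X.flat U where
  app n := Quotient.lift (F.app n) (F.flatSetoid_le_ker hU n)
  naturality φ := Quotient.ind (F.naturality φ)

theorem SymSet.flatLift_comp_flatProj {X U : SymSet} (hU : U.Spiny) (F : SymSetHom X U) :
    (X.flatLift hU F).comp X.flatProj = F :=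
  rfl

theorem SymSet.comp_flatProj_injective (X U : SymSet) :
    Function.Injective fun G : SymSetHom X.flat U => G.comp X.flatProj := by
  intro G₁ G₂ h
  refine SymSetHom.ext (funext fun n => funext (Quotient.ind fun x => ?_))
  exact congrFun (congrFun (congrArg SymSetHom.app h) n) x

/-- For every spiny symmetric set `U`, precomposition with the
quotient map `X → X^♭` is a bijection `Hom(X^♭, U) → Hom(X, U)`. -/
theorem flat_reflection (X U : SymSet) (hU : U.Spiny) :
    Function.Bijective fun G : SymSetHom X.flat U => G.comp X.flatProj :=
  ⟨X.comp_flatProj_injective U, fun F => ⟨X.flatLift hU F, X.flatLift_comp_flatProj hU F⟩⟩
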